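/- arXiv:1901.00451 — 4 statements merged into one kernel-verified Lean document; each statement's English description precedes it below -/
import Mathlib

section
/- Let ℓ : ℝ^d → ℝ be differentiable with L-Lipschitz gradient, let 0 < η ≤ 1/L, let x* be a global minimizer of ℓ, and suppose ℓ is star-convex at x with respect to x*, i.e., ℓ(x) - ℓ(x*) + ⟨x* - x, ∇ℓ(x)⟩ ≤ 0. Then the gradient step x⁺ = x - η∇ℓ(x) satisfies ‖x⁺ - x*‖ ≤ ‖x - x*‖. -/
open scoped RealInnerProductSpace

lemma descent_lemma {d : ℕ} (ℓ : EuclideanSpace ℝ (Fin d) → ℝ)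
    (g : EuclideanSpace ℝ (Fin d) → EuclideanSpace ℝ (Fin d)) (L : ℝ)
    (hgrad : ∀ z, HasGradientAt ℓ (g z) z)
    (hlip : ∀ u v, ‖g u - g v‖ ≤ L * ‖u - v‖)
    (x y : EuclideanSpace ℝ (Fin d)) :
    ℓ y ≤ ℓ x + ⟪g x, y - x⟫ + L / 2 * ‖y - x‖ ^ 2 := by
  set v := y - x with hv
  set F : ℝ → ℝ := fun t => ℓ (x + t • v) - t * ⟪g x, v⟫ - L * ‖v‖ ^ 2 * t ^ 2 / 2 with hF
  have hderiv : ∀ t : ℝ, HasDerivAt F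
      (⟪g (x + t • v), v⟫ - ⟪g x, v⟫ - L * ‖v‖ ^ 2 * t) t := by
    intro t
    have hγ : HasDerivAt (fun t : ℝ => x + t • v) v t := by
      simpa using ((hasDerivAt_id t).smul_const v).const_add x
    have h1 : HasDerivAt (fun t : ℝ => ℓ (x + t • v)) ⟪g (x + t • v), v⟫ t := by
      have := (hgrad (x + t • v)).hasFDerivAt.comp_hasDerivAt t hγ
      simp at this; exact this
    have h2 : HasDerivAt (fun t : ℝ => t * ⟪g x, v⟫) ⟪g x, v⟫ t := by
      simpa using (hasDerivAt_id t).mul_const ⟪g x, v⟫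
    have h3 : HasDerivAt (fun t : ℝ => L * ‖v‖ ^ 2 * t ^ 2 / 2) (L * ‖v‖ ^ 2 * t) t := by
      have := ((hasDerivAt_pow 2 t).const_mul (L * ‖v‖ ^ 2)).div_const 2
      refine this.congr_deriv ?_
      norm_num
      ring
    exact (h1.sub h2).sub h3
  have hanti : AntitoneOn F (Set.Icc 0 1) := by
    apply antitoneOn_of_deriv_nonpos (convex_Icc 0 1)
    · exact fun t _ => (hderiv t).continuousAt.continuousWithinAt
    · intro t ht
      exact ((hderiv t).differentiableAt).differentiableWithinAt
    · intro t ht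
      rw [interior_Icc] at ht
      rw [(hderiv t).deriv]
      have hI : ⟪g (x + t • v) - g x, v⟫ ≤ L * ‖v‖ ^ 2 * t := by
        calc ⟪g (x + t • v) - g x, v⟫ ≤ ‖g (x + t • v) - g x‖ * ‖v‖ :=
              real_inner_le_norm _ _
          _ ≤ (L * ‖x + t • v - x‖) * ‖v‖ :=
              mul_le_mul_of_nonneg_right (hlip _ _) (norm_nonneg v)
          _ = L * ‖v‖ ^ 2 * t := by
              have : x + t • v - x = t • v := by abel
              rw [this, norm_smul, Real.norm_eq_abs, abs_of_pos ht.1]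
              ring
      have := inner_sub_left (𝕜 := ℝ) (g (x + t • v)) (g x) v
      linarith [hI, this.symm.le, this.le]
  have hF10 : F 1 ≤ F 0 := hanti (by norm_num) (by norm_num) zero_le_one
  have h0 : F 0 = ℓ x := by simp [hF]
  have h1 : F 1 = ℓ y - ⟪g x, v⟫ - L * ‖v‖ ^ 2 / 2 := by
    simp [hF, hv]
  rw [h0, h1] at hF10
  linarith

theorem gd_star_convex_nonexpansive {d : ℕ} (ℓ : EuclideanSpace ℝ (Fin d) → ℝ)
    (g : EuclideanSpace ℝ (Fin d) → EuclideanSpace ℝ (Fin d)) (L η : ℝ)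
    (hL : 0 < L)
    (hgrad : ∀ z, HasGradientAt ℓ (g z) z)
    (hlip : ∀ u v, ‖g u - g v‖ ≤ L * ‖u - v‖)
    (hη : 0 < η) (hηL : η ≤ 1 / L)
    (xstar : EuclideanSpace ℝ (Fin d)) (hmin : ∀ y, ℓ xstar ≤ ℓ y)
    (x : EuclideanSpace ℝ (Fin d))
    (hstar : ℓ x - ℓ xstar + ⟪xstar - x, g x⟫ ≤ 0) :
    ‖(x - η • g x) - xstar‖ ≤ ‖x - xstar‖ := by
  set D := ℓ x - ℓ xstar with hD
  have hD0 : 0 ≤ D := sub_nonneg.2 (hmin x)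
  -- gradient bound: ‖g x‖² ≤ 2 L D
  have hgb : ‖g x‖ ^ 2 ≤ 2 * L * D := by
    have := descent_lemma ℓ g L hgrad hlip x (x - (1 / L) • g x)
    have hy : x - (1 / L) • g x - x = -((1 / L) • g x) := by abel
    rw [hy] at this
    have hinner : ⟪g x, -((1 / L) • g x)⟫ = -(1 / L) * ‖g x‖ ^ 2 := by
      rw [inner_neg_right, real_inner_smul_right, real_inner_self_eq_norm_sq]
      ring
    have hnorm : ‖-((1 / L) • g x)‖ ^ 2 = (1 / L) ^ 2 * ‖g x‖ ^ 2 := by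
      rw [norm_neg, norm_smul, mul_pow, Real.norm_eq_abs, sq_abs]
    rw [hinner, hnorm] at this
    have hmin' := hmin (x - (1 / L) • g x)
    have hLne : L ≠ 0 := ne_of_gt hL
    have : ℓ xstar ≤ ℓ x - 1 / (2 * L) * ‖g x‖ ^ 2 := by
      calc ℓ xstar ≤ ℓ (x - (1 / L) • g x) := hmin'
        _ ≤ ℓ x + -(1 / L) * ‖g x‖ ^ 2 + L / 2 * ((1 / L) ^ 2 * ‖g x‖ ^ 2) := this
        _ = ℓ x - 1 / (2 * L) * ‖g x‖ ^ 2 := by field_simp; ring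
    have h2L : 0 < 2 * L := by linarith
    have h' : 1 / (2 * L) * ‖g x‖ ^ 2 ≤ D := by rw [hD]; linarith
    have hkey : 2 * L * (1 / (2 * L) * ‖g x‖ ^ 2) = ‖g x‖ ^ 2 := by field_simp
    calc ‖g x‖ ^ 2 = 2 * L * (1 / (2 * L) * ‖g x‖ ^ 2) := hkey.symm
      _ ≤ 2 * L * D := mul_le_mul_of_nonneg_left h' h2L.le
  -- star-convexity bound
  have hsb : D ≤ ⟪g x, x - xstar⟫ := by
    rw [show xstar - x = -(x - xstar) from by abel, inner_neg_left, real_inner_comm] at hstar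
    linarith
  -- squared norm expansion
  have hexp : ‖(x - η • g x) - xstar‖ ^ 2 =
      ‖x - xstar‖ ^ 2 - 2 * η * ⟪g x, x - xstar⟫ + η ^ 2 * ‖g x‖ ^ 2 := by
    have : (x - η • g x) - xstar = (x - xstar) - η • g x := by abel
    rw [this, norm_sub_sq_real, real_inner_smul_right, norm_smul, Real.norm_eq_abs,
      mul_pow, sq_abs, real_inner_comm]
    ring
  have hηL' : η * L ≤ 1 := (le_div_iff₀ hL).mp hηL
  have hsq : ‖(x - η • g x) - xstar‖ ^ 2 ≤ ‖x - xstar‖ ^ 2 := by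
    rw [hexp]
    nlinarith [mul_le_mul_of_nonneg_left hgb (sq_nonneg η),
      mul_le_mul_of_nonneg_left hsb hη.le,
      mul_nonneg (mul_nonneg hη.le hD0) (sub_nonneg.2 hηL')]
  nlinarith [norm_nonneg ((x - η • g x) - xstar), norm_nonneg (x - xstar), hsq]
end

section
/- Under the SGD update x_{k+1} = x_k - η∇ℓ_{ξ_k}(x_k) with 0 < η ≤ 1/L and all ℓ_i having L-Lipschitz gradients, if x* is a common global minimizer of all ℓ_i and each epoch B satisfies the epochwise star-convexity condition, then for every epoch B: ‖x_{n(B+1)} - x*‖² ≤ ‖x_{nB} - x*‖² - 2η ∑_{k=nB}^{n(B+1)-1} (ℓ_{ξ_k}(x_{k+1}) - ℓ_{ξ_k}(x*)), where each summand is nonnegative. -/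
open scoped RealInnerProductSpace

lemma sgd_descent_lemma {d : ℕ} (f : EuclideanSpace ℝ (Fin d) → ℝ)
    (g : EuclideanSpace ℝ (Fin d) → EuclideanSpace ℝ (Fin d)) (L : ℝ) (hL : 0 ≤ L)
    (hgrad : ∀ z, HasGradientAt f (g z) z)
    (hlip : ∀ u v, ‖g u - g v‖ ≤ L * ‖u - v‖) (x y : EuclideanSpace ℝ (Fin d)) :
    f y ≤ f x + ⟪g x, y - x⟫ + L / 2 * ‖y - x‖ ^ 2 := by
  set v := y - x with hv
  have hg_cont : Continuous g := by
    refine (LipschitzWith.of_dist_le_mul (K := L.toNNReal) fun u w => ?_).continuous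
    simpa [dist_eq_norm, Real.coe_toNNReal L hL] using hlip u w
  have hline : ∀ t : ℝ, HasDerivAt (fun s : ℝ => x + s • v) v t := fun t => by
    simpa using ((hasDerivAt_id t).smul_const v).const_add x
  have hderiv : ∀ t : ℝ, HasDerivAt (fun s : ℝ => f (x + s • v)) ⟪g (x + t • v), v⟫ t := by
    intro t
    have h1 := (hgrad (x + t • v)).hasFDerivAt.comp_hasDerivAt t (hline t)
    simp [InnerProductSpace.toDual_apply_apply] at h1; exact h1
  have hcont : Continuous fun t : ℝ => ⟪g (x + t • v), v⟫ :=
    (hg_cont.comp (by continuity)).inner continuous_const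
  have hint : ∫ t in (0:ℝ)..1, ⟪g (x + t • v), v⟫ = f (x + (1:ℝ) • v) - f (x + (0:ℝ) • v) :=
    intervalIntegral.integral_eq_sub_of_hasDerivAt (fun t _ => hderiv t)
      (hcont.intervalIntegrable 0 1)
  have hbound : ∫ t in (0:ℝ)..1, ⟪g (x + t • v), v⟫ ≤
      ∫ t in (0:ℝ)..1, (⟪g x, v⟫ + (L * ‖v‖ ^ 2) * t) := by
    refine intervalIntegral.integral_mono_on (by norm_num) (hcont.intervalIntegrable 0 1)
      ((continuous_const.add (continuous_const.mul continuous_id)).intervalIntegrable 0 1) ?_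
    intro t ht
    rcases ht with ⟨ht0, ht1⟩
    have h1 : ⟪g (x + t • v), v⟫ = ⟪g x, v⟫ + ⟪g (x + t • v) - g x, v⟫ := by
      rw [inner_sub_left]; ring
    have h2 : ⟪g (x + t • v) - g x, v⟫ ≤ ‖g (x + t • v) - g x‖ * ‖v‖ :=
      real_inner_le_norm _ _
    have h3 : ‖g (x + t • v) - g x‖ ≤ L * (t * ‖v‖) := by
      have := hlip (x + t • v) x
      simpa [norm_smul, abs_of_nonneg ht0] using this
    have h4 : ‖g (x + t • v) - g x‖ * ‖v‖ ≤ L * (t * ‖v‖) * ‖v‖ :=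
      mul_le_mul_of_nonneg_right h3 (norm_nonneg _)
    nlinarith [norm_nonneg v]
  have hR : ∫ t in (0:ℝ)..1, (⟪g x, v⟫ + (L * ‖v‖ ^ 2) * t) =
      ⟪g x, v⟫ + L / 2 * ‖v‖ ^ 2 := by
    rw [intervalIntegral.integral_add (continuous_const.intervalIntegrable 0 1)
      ((by fun_prop : Continuous fun t : ℝ => L * ‖v‖ ^ 2 * t).intervalIntegrable 0 1),
      intervalIntegral.integral_const_mul, integral_id]
    simp; ring
  have e1 : x + (1:ℝ) • v = y := by rw [one_smul, hv]; abel
  have e0 : x + (0:ℝ) • v = x := by simp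
  rw [e1, e0] at hint
  linarith [hbound.trans_eq hR, hint]

open scoped BigOperators

theorem sgd_epochwise_squared_distance_bound {d n : ℕ}
    (ℓ : Fin n → EuclideanSpace ℝ (Fin d) → ℝ)
    (g : Fin n → EuclideanSpace ℝ (Fin d) → EuclideanSpace ℝ (Fin d))
    (L η : ℝ) (hL : 0 < L)
    (hgrad : ∀ i z, HasGradientAt (ℓ i) (g i z) z)
    (hlip : ∀ i u v, ‖g i u - g i v‖ ≤ L * ‖u - v‖)
    (hη : 0 < η) (hηL : η ≤ 1 / L)
    (x : ℕ → EuclideanSpace ℝ (Fin d)) (ξ : ℕ → Fin n)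
    (hupd : ∀ k, x (k + 1) = x k - η • g (ξ k) (x k))
    (xstar : EuclideanSpace ℝ (Fin d))
    (hmin : ∀ i y, ℓ i xstar ≤ ℓ i y)
    (hstar : ∀ B : ℕ, ∑ t ∈ Finset.range n,
        (ℓ (ξ (n * B + t)) (x (n * B + t)) - ℓ (ξ (n * B + t)) xstar +
          ⟪xstar - x (n * B + t), g (ξ (n * B + t)) (x (n * B + t))⟫) ≤ 0) :
    ∀ B : ℕ,
      (∀ t ∈ Finset.range n,
        0 ≤ ℓ (ξ (n * B + t)) (x (n * B + t + 1)) - ℓ (ξ (n * B + t)) xstar) ∧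
      ‖x (n * (B + 1)) - xstar‖ ^ 2 ≤ ‖x (n * B) - xstar‖ ^ 2 -
        2 * η * ∑ t ∈ Finset.range n,
          (ℓ (ξ (n * B + t)) (x (n * B + t + 1)) - ℓ (ξ (n * B + t)) xstar) := by
  intro B
  refine ⟨fun t _ => sub_nonneg.mpr (hmin _ _), ?_⟩
  have hLη : η * L ≤ 1 := (le_div_iff₀ hL).1 hηL
  -- per-step bound
  have hsum : ∀ t ∈ Finset.range n,
      ‖x (n * B + t + 1) - xstar‖ ^ 2 - ‖x (n * B + t) - xstar‖ ^ 2 +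
        2 * η * (ℓ (ξ (n * B + t)) (x (n * B + t + 1)) - ℓ (ξ (n * B + t)) xstar) ≤
      2 * η * (ℓ (ξ (n * B + t)) (x (n * B + t)) - ℓ (ξ (n * B + t)) xstar +
          ⟪xstar - x (n * B + t), g (ξ (n * B + t)) (x (n * B + t))⟫) := by
    intro t _
    set k := n * B + t with hk
    set a := x k with ha
    set G := g (ξ k) (x k) with hG
    have hx1 : x (k + 1) = a - η • G := hupd k
    have hrw : a - η • G - xstar = (a - xstar) - η • G := by abel
    have hnorm : ‖x (k + 1) - xstar‖ ^ 2 =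
        ‖a - xstar‖ ^ 2 - 2 * η * ⟪a - xstar, G⟫ + η ^ 2 * ‖G‖ ^ 2 := by
      rw [hx1, hrw, norm_sub_sq_real, real_inner_smul_right, norm_smul]
      rw [Real.norm_eq_abs, abs_of_pos hη]
      ring
    have hdesc := sgd_descent_lemma (ℓ (ξ k)) (g (ξ k)) L hL.le (hgrad _) (hlip _)
      a (x (k + 1))
    have hd1 : x (k + 1) - a = -(η • G) := by rw [hx1]; abel
    have hinner : ⟪G, x (k + 1) - a⟫ = -(η * ‖G‖ ^ 2) := by
      rw [hd1, inner_neg_right, real_inner_smul_right, real_inner_self_eq_norm_sq]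
    have hnn : ‖x (k + 1) - a‖ ^ 2 = η ^ 2 * ‖G‖ ^ 2 := by
      rw [hd1, norm_neg, norm_smul, Real.norm_eq_abs, abs_of_pos hη]; ring
    rw [hinner, hnn] at hdesc
    have hflip : ⟪xstar - a, G⟫ = -⟪a - xstar, G⟫ := by
      rw [← inner_neg_left]; congr 1; abel
    rw [hnorm, hflip]
    nlinarith [mul_nonneg (mul_nonneg hη.le hη.le) (sq_nonneg ‖G‖),
      mul_le_mul_of_nonneg_left hdesc (by positivity : (0:ℝ) ≤ 2 * η)]
  have S := Finset.sum_le_sum hsum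
  rw [Finset.sum_add_distrib, ← Finset.mul_sum, ← Finset.mul_sum] at S
  have tele := Finset.sum_range_sub (fun t => ‖x (n * B + t) - xstar‖ ^ 2) n
  simp only [← add_assoc] at tele
  rw [tele] at S
  simp only [Nat.add_zero] at S
  have hstarB := hstar B
  have h2 : 2 * η * ∑ t ∈ Finset.range n,
      (ℓ (ξ (n * B + t)) (x (n * B + t)) - ℓ (ξ (n * B + t)) xstar +
        ⟪xstar - x (n * B + t), g (ξ (n * B + t)) (x (n * B + t))⟫) ≤ 0 :=
    mul_nonpos_of_nonneg_of_nonpos (by positivity) hstarB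
  have hidx : n * (B + 1) = n * B + n := by ring
  rw [hidx]
  linarith
end

section
/- Under the epochwise star-convex path assumption with a common global minimizer x*, SGD with step η ∈ (0, 1/L] generates a bounded sequence {x_k}: explicitly, ‖x_{nB} - x*‖ ≤ ‖x_0 - x*‖ for all epochs B, and within each epoch ‖x_{nB+t} - x*‖ ≤ ‖x_0 - x*‖ + η ∑_{j=0}^{t-1} ‖∇ℓ_{ξ_{nB+j}}(x_{nB+j})‖, so if the gradients are bounded on the ball of radius ‖x_0 - x*‖ around x*, the full sequence is bounded. -/
open scoped RealInnerProductSpace BigOperators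

lemma sgd_line_deriv {d : ℕ} (f : EuclideanSpace ℝ (Fin d) → ℝ)
    (g : EuclideanSpace ℝ (Fin d) → EuclideanSpace ℝ (Fin d))
    (hg : ∀ z, HasGradientAt f (g z) z)
    (a v : EuclideanSpace ℝ (Fin d)) (t : ℝ) :
    HasDerivAt (fun s : ℝ => f (a + s • v)) ⟪g (a + t • v), v⟫ t := by
  have hc : HasDerivAt (fun s : ℝ => a + s • v) v t := by
    simpa using ((hasDerivAt_id t).smul_const v).const_add a
  have := (hg (a + t • v)).hasFDerivAt.comp_hasDerivAt t hc
  exact this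

lemma sgd_descent {d : ℕ} (f : EuclideanSpace ℝ (Fin d) → ℝ)
    (g : EuclideanSpace ℝ (Fin d) → EuclideanSpace ℝ (Fin d))
    (L : ℝ)
    (hg : ∀ z, HasGradientAt f (g z) z)
    (hlip : ∀ u v, ‖g u - g v‖ ≤ L * ‖u - v‖)
    (a b : EuclideanSpace ℝ (Fin d)) :
    f b ≤ f a + ⟪g a, b - a⟫ + L / 2 * ‖b - a‖ ^ 2 := by
  set v := b - a with hv
  set ψ : ℝ → ℝ := fun t => f a + t * ⟪g a, v⟫ + L / 2 * t ^ 2 * ‖v‖ ^ 2 - f (a + t • v) with hψ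
  have hder : ∀ t : ℝ, HasDerivAt ψ
      (⟪g a, v⟫ + L * t * ‖v‖ ^ 2 - ⟪g (a + t • v), v⟫) t := by
    intro t
    have h1 : HasDerivAt (fun s : ℝ => f a + s * ⟪g a, v⟫ + L / 2 * s ^ 2 * ‖v‖ ^ 2)
        (⟪g a, v⟫ + L * t * ‖v‖ ^ 2) t := by
      have := (((hasDerivAt_id t).mul_const (⟪g a, v⟫ : ℝ)).const_add (f a)).add
        ((((hasDerivAt_pow 2 t).const_mul (L / 2)).mul_const (‖v‖ ^ 2)))
      refine this.congr_deriv ?_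
      ring
    exact h1.sub (sgd_line_deriv f g hg a v t)
  have hmono : MonotoneOn ψ (Set.Icc (0:ℝ) 1) := by
    apply monotoneOn_of_deriv_nonneg (convex_Icc 0 1)
    · exact fun t _ => (hder t).continuousAt.continuousWithinAt
    · intro t _
      exact (hder t).differentiableAt.differentiableWithinAt
    · intro t ht
      rw [(hder t).deriv]
      have ht0 : 0 ≤ t := (interior_subset ht : t ∈ Set.Icc (0:ℝ) 1).1
      have hi : ⟪g (a + t • v) - g a, v⟫ ≤ L * t * ‖v‖ ^ 2 := by
        calc ⟪g (a + t • v) - g a, v⟫ ≤ ‖g (a + t • v) - g a‖ * ‖v‖ :=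
              real_inner_le_norm _ _
          _ ≤ (L * ‖(a + t • v) - a‖) * ‖v‖ := by
              gcongr; exact hlip _ _
          _ = L * t * ‖v‖ ^ 2 := by
              simp [norm_smul, abs_of_nonneg ht0]; ring
      rw [inner_sub_left] at hi
      linarith
  have h01 : ψ 0 ≤ ψ 1 := hmono (by norm_num) (by norm_num) (by norm_num)
  have e0 : ψ 0 = 0 := by simp [hψ]
  have e1 : ψ 1 = f a + ⟪g a, v⟫ + L / 2 * ‖v‖ ^ 2 - f b := by
    simp [hψ, hv]
  rw [e0, e1] at h01
  linarith

theorem sgd_bounded_sequence {d n : ℕ}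
    (ℓ : Fin n → EuclideanSpace ℝ (Fin d) → ℝ)
    (g : Fin n → EuclideanSpace ℝ (Fin d) → EuclideanSpace ℝ (Fin d))
    (L η : ℝ) (hL : 0 < L)
    (hgrad : ∀ i z, HasGradientAt (ℓ i) (g i z) z)
    (hlip : ∀ i u v, ‖g i u - g i v‖ ≤ L * ‖u - v‖)
    (hη : 0 < η) (hηL : η ≤ 1 / L)
    (x : ℕ → EuclideanSpace ℝ (Fin d)) (ξ : ℕ → Fin n)
    (hupd : ∀ k, x (k + 1) = x k - η • g (ξ k) (x k))
    (xstar : EuclideanSpace ℝ (Fin d))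
    (hmin : ∀ i y, ℓ i xstar ≤ ℓ i y)
    (hstar : ∀ B : ℕ, ∑ t ∈ Finset.range n,
        (ℓ (ξ (n * B + t)) (x (n * B + t)) - ℓ (ξ (n * B + t)) xstar +
          ⟪xstar - x (n * B + t), g (ξ (n * B + t)) (x (n * B + t))⟫) ≤ 0) :
    (∀ B : ℕ, ‖x (n * B) - xstar‖ ≤ ‖x 0 - xstar‖) ∧
    (∀ B t : ℕ, t < n →
      ‖x (n * B + t) - xstar‖ ≤ ‖x 0 - xstar‖ +
        η * ∑ j ∈ Finset.range t, ‖g (ξ (n * B + j)) (x (n * B + j))‖) ∧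
    (∀ C : ℝ, (∀ (i : Fin n) (y : EuclideanSpace ℝ (Fin d)),
        ‖y - xstar‖ ≤ ‖x 0 - xstar‖ → ‖g i y‖ ≤ C) →
      ∃ M : ℝ, ∀ k, ‖x k - xstar‖ ≤ M) := by
  have hn : 0 < n := (ξ 0).pos
  set R := ‖x 0 - xstar‖ with hR
  have hR0 : 0 ≤ R := norm_nonneg _
  -- gradient bound from smoothness + global min
  have hgsq : ∀ i z, ‖g i z‖ ^ 2 ≤ 2 * L * (ℓ i z - ℓ i xstar) := by
    intro i z
    have hd := sgd_descent (ℓ i) (g i) L (hgrad i) (hlip i) z (z - (1 / L) • g i z)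
    have he : (z - (1 / L) • g i z) - z = -((1 / L) • g i z) := by abel
    rw [he] at hd
    have h1 : ⟪g i z, -((1 / L) • g i z)⟫ = -(1 / L) * ‖g i z‖ ^ 2 := by
      rw [inner_neg_right, real_inner_smul_right, real_inner_self_eq_norm_sq]; ring
    have h2 : ‖-((1 / L) • g i z)‖ ^ 2 = (1 / L) ^ 2 * ‖g i z‖ ^ 2 := by
      rw [norm_neg, norm_smul, mul_pow, Real.norm_eq_abs, sq_abs]
    rw [h1, h2] at hd
    have hm := hmin i (z - (1 / L) • g i z)
    have hLne : L ≠ 0 := ne_of_gt hL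
    have h4 : ℓ i xstar ≤ ℓ i z - 1 / (2 * L) * ‖g i z‖ ^ 2 := by
      refine le_trans hm (le_trans hd (le_of_eq ?_))
      field_simp
      ring
    calc ‖g i z‖ ^ 2 = 2 * L * (1 / (2 * L) * ‖g i z‖ ^ 2) := by field_simp
      _ ≤ 2 * L * (ℓ i z - ℓ i xstar) := by
          apply mul_le_mul_of_nonneg_left (by linarith) (by positivity)
  -- step expansion
  have hstep : ∀ k, ‖x (k + 1) - xstar‖ ^ 2 =
      ‖x k - xstar‖ ^ 2 - 2 * η * ⟪x k - xstar, g (ξ k) (x k)⟫ +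
        η ^ 2 * ‖g (ξ k) (x k)‖ ^ 2 := by
    intro k
    rw [hupd k, sub_right_comm, norm_sub_sq_real, real_inner_smul_right, norm_smul,
      Real.norm_eq_abs, abs_of_pos hη]
    ring
  -- epoch decrease in squared norm
  have hepoch : ∀ B, ‖x (n * (B + 1)) - xstar‖ ^ 2 ≤ ‖x (n * B) - xstar‖ ^ 2 := by
    intro B
    have htel := Finset.sum_range_sub (fun t => ‖x (n * B + t) - xstar‖ ^ 2) n
    have key : ∀ t, ‖x (n * B + (t + 1)) - xstar‖ ^ 2 - ‖x (n * B + t) - xstar‖ ^ 2 =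
        η ^ 2 * ‖g (ξ (n * B + t)) (x (n * B + t))‖ ^ 2 -
          2 * η * ⟪x (n * B + t) - xstar, g (ξ (n * B + t)) (x (n * B + t))⟫ := by
      intro t
      have h := hstep (n * B + t)
      rw [show n * B + (t + 1) = (n * B + t) + 1 by ring, h]
      ring
    have esum : ‖x (n * B + n) - xstar‖ ^ 2 - ‖x (n * B) - xstar‖ ^ 2 =
        η ^ 2 * (∑ t ∈ Finset.range n, ‖g (ξ (n * B + t)) (x (n * B + t))‖ ^ 2) -
          2 * η * (∑ t ∈ Finset.range n, ⟪x (n * B + t) - xstar, g (ξ (n * B + t)) (x (n * B + t))⟫) := by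
      calc ‖x (n * B + n) - xstar‖ ^ 2 - ‖x (n * B) - xstar‖ ^ 2
          = ∑ t ∈ Finset.range n,
            (‖x (n * B + (t + 1)) - xstar‖ ^ 2 - ‖x (n * B + t) - xstar‖ ^ 2) := by
            rw [htel]; simp
        _ = _ := by
            rw [Finset.sum_congr rfl (fun t _ => key t), Finset.sum_sub_distrib,
              ← Finset.mul_sum, ← Finset.mul_sum]
    have hS : ∑ t ∈ Finset.range n,
        (ℓ (ξ (n * B + t)) (x (n * B + t)) - ℓ (ξ (n * B + t)) xstar) ≤
        ∑ t ∈ Finset.range n, ⟪x (n * B + t) - xstar, g (ξ (n * B + t)) (x (n * B + t))⟫ := by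
      have h := hstar B
      rw [Finset.sum_add_distrib] at h
      have : ∀ t ∈ Finset.range n,
          ⟪xstar - x (n * B + t), g (ξ (n * B + t)) (x (n * B + t))⟫ =
          -⟪x (n * B + t) - xstar, g (ξ (n * B + t)) (x (n * B + t))⟫ := by
        intro t _
        rw [← inner_neg_left, neg_sub]
      rw [Finset.sum_congr rfl this, Finset.sum_neg_distrib] at h
      linarith
    have hG : η ^ 2 * (∑ t ∈ Finset.range n, ‖g (ξ (n * B + t)) (x (n * B + t))‖ ^ 2) ≤
        2 * η * ∑ t ∈ Finset.range n,
          (ℓ (ξ (n * B + t)) (x (n * B + t)) - ℓ (ξ (n * B + t)) xstar) := by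
      rw [Finset.mul_sum, Finset.mul_sum]
      refine Finset.sum_le_sum fun t _ => ?_
      have h1 := hgsq (ξ (n * B + t)) (x (n * B + t))
      have h2 : η * ‖g (ξ (n * B + t)) (x (n * B + t))‖ ^ 2 ≤
          (1 / L) * ‖g (ξ (n * B + t)) (x (n * B + t))‖ ^ 2 := by
        apply mul_le_mul_of_nonneg_right hηL (sq_nonneg _)
      have h3 : (1 / L) * ‖g (ξ (n * B + t)) (x (n * B + t))‖ ^ 2 ≤
          2 * (ℓ (ξ (n * B + t)) (x (n * B + t)) - ℓ (ξ (n * B + t)) xstar) := by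
        rw [div_mul_eq_mul_div, one_mul, div_le_iff₀ hL] at *
        nlinarith
      nlinarith
    have h2S := mul_le_mul_of_nonneg_left hS (by positivity : (0:ℝ) ≤ 2 * η)
    have : ‖x (n * B + n) - xstar‖ ^ 2 - ‖x (n * B) - xstar‖ ^ 2 ≤ 0 := by
      rw [esum]; linarith
    rw [show n * (B + 1) = n * B + n by ring]
    linarith
  -- part 1
  have part1 : ∀ B : ℕ, ‖x (n * B) - xstar‖ ≤ R := by
    intro B
    induction B with
    | zero => simp [hR]
    | succ B ih =>
        exact le_of_pow_le_pow_left₀ two_ne_zero hR0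
          (le_trans (hepoch B) (pow_le_pow_left₀ (norm_nonneg _) ih 2))
  -- one-step norm growth
  have hgrow : ∀ k, ‖x (k + 1) - xstar‖ ≤ ‖x k - xstar‖ + η * ‖g (ξ k) (x k)‖ := by
    intro k
    rw [hupd k, sub_right_comm]
    refine le_trans (norm_sub_le _ _) ?_
    rw [norm_smul, Real.norm_eq_abs, abs_of_pos hη]
  -- part 2 (for all t)
  have part2 : ∀ B t : ℕ, ‖x (n * B + t) - xstar‖ ≤ R +
      η * ∑ j ∈ Finset.range t, ‖g (ξ (n * B + j)) (x (n * B + j))‖ := by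
    intro B t
    induction t with
    | zero => simpa using part1 B
    | succ t ih =>
        have h := hgrow (n * B + t)
        rw [show n * B + (t + 1) = (n * B + t) + 1 by ring]
        rw [Finset.sum_range_succ, mul_add]
        linarith
  refine ⟨part1, fun B t _ => part2 B t, ?_⟩
  -- part 3
  intro C hC
  have hC0 : 0 ≤ C := le_trans (norm_nonneg _) (hC ⟨0, hn⟩ xstar (by simp [hR0]))
  have hgb : ∀ (i : Fin n) y, ‖g i y‖ ≤ C + L * ‖y - xstar‖ := by
    intro i y
    calc ‖g i y‖ = ‖(g i y - g i xstar) + g i xstar‖ := by rw [sub_add_cancel]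
      _ ≤ ‖g i y - g i xstar‖ + ‖g i xstar‖ := norm_add_le _ _
      _ ≤ L * ‖y - xstar‖ + C := add_le_add (hlip i y xstar) (hC i xstar (by simp [hR0]))
      _ = C + L * ‖y - xstar‖ := by ring
  have hbase : (1:ℝ) ≤ 1 + η * L := by nlinarith
  have key3 : ∀ B t : ℕ, ‖x (n * B + t) - xstar‖ ≤ (1 + η * L) ^ t * (R + η * C * t) := by
    intro B t
    induction t with
    | zero => simpa using part1 B
    | succ t ih =>
        have hg1 := hgb (ξ (n * B + t)) (x (n * B + t))
        have h := hgrow (n * B + t)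
        have hpow1 : (1:ℝ) ≤ (1 + η * L) ^ (t + 1) := one_le_pow₀ hbase
        have hpow0 : (0:ℝ) ≤ (1 + η * L) ^ t := by positivity
        have hmul := mul_le_mul_of_nonneg_left ih (by nlinarith : (0:ℝ) ≤ 1 + η * L)
        rw [show n * B + (t + 1) = (n * B + t) + 1 by ring]
        have hr0 : 0 ≤ ‖x (n * B + t) - xstar‖ := norm_nonneg _
        rw [pow_succ] at hpow1 ⊢
        push_cast
        linarith [mul_le_mul_of_nonneg_left hg1 (le_of_lt hη),
          mul_le_mul_of_nonneg_left hpow1 (mul_nonneg hη.le hC0)]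
  refine ⟨(1 + η * L) ^ n * (R + η * C * n), fun k => ?_⟩
  have hk : n * (k / n) + k % n = k := Nat.div_add_mod k n
  have h := key3 (k / n) (k % n)
  rw [hk] at h
  refine le_trans h ?_
  have htn : k % n ≤ n := le_of_lt (Nat.mod_lt _ hn)
  have htn' : (↑(k % n) : ℝ) ≤ (n : ℝ) := by exact_mod_cast htn
  apply mul_le_mul
  · exact pow_le_pow_right₀ hbase htn
  · linarith [mul_le_mul_of_nonneg_left htn' (mul_nonneg hη.le hC0)]
  · positivity
  · positivity
end

section
/- Suppose for all iterations k and every x* in the set X*_{ξ_k} of global minimizers of ℓ_{ξ_k}, the iterationwise star-convexity ℓ_{ξ_k}(x_k) - ℓ_{ξ_k}(x*) + ⟨x* - x_k, ∇ℓ_{ξ_k}(x_k)⟩ ≤ 0 holds, and SGD uses step η ∈ (0, 1/L]. Then for every k and every x* ∈ X*_{ξ_k}: ‖x_{k+1} - x*‖ ≤ ‖x_k - x*‖. -/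
open scoped RealInnerProductSpace

section aux
variable {F : Type*} [NormedAddCommGroup F] [InnerProductSpace ℝ F] [CompleteSpace F]

lemma descent_aux (f : F → ℝ) (g : F → F) (L : ℝ) (hL : 0 < L)
    (hgrad : ∀ z, HasGradientAt f (g z) z)
    (hlip : ∀ u v, ‖g u - g v‖ ≤ L * ‖u - v‖)
    (x v : F) : f (x + v) ≤ f x + ⟪g x, v⟫ + L / 2 * ‖v‖ ^ 2 := by
  set ψ : ℝ → ℝ := fun t => f (x + t • v) - t * ⟪g x, v⟫ - L * t ^ 2 / 2 * ‖v‖ ^ 2 with hψ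
  have hline : ∀ t : ℝ, HasDerivAt (fun s : ℝ => x + s • v) v t := by
    intro t
    simpa using ((hasDerivAt_id t).smul_const v).const_add x
  have hφ : ∀ t : ℝ, HasDerivAt (fun s => f (x + s • v)) ⟪g (x + t • v), v⟫ t := by
    intro t
    have h1 := ((hgrad (x + t • v)).hasFDerivAt).comp_hasDerivAt t (hline t)
    simpa [InnerProductSpace.toDual_apply_apply, Function.comp_def] using h1
  have hψ' : ∀ t : ℝ, HasDerivAt ψ
      (⟪g (x + t • v), v⟫ - ⟪g x, v⟫ - L * t * ‖v‖ ^ 2) t := by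
    intro t
    have h2 : HasDerivAt (fun s : ℝ => s * ⟪g x, v⟫) ⟪g x, v⟫ t := by
      simpa using (hasDerivAt_id t).mul_const ⟪g x, v⟫
    have h3 : HasDerivAt (fun s : ℝ => L * s ^ 2 / 2 * ‖v‖ ^ 2) (L * t * ‖v‖ ^ 2) t := by
      have : HasDerivAt (fun s : ℝ => s ^ 2) (2 * t) t := by
        simpa using hasDerivAt_pow 2 t
      have := ((this.const_mul L).div_const 2).mul_const (‖v‖ ^ 2)
      exact this.congr_deriv (by ring)
    exact ((hφ t).sub h2).sub h3
  have hanti : AntitoneOn ψ (Set.Icc 0 1) := by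
    apply antitoneOn_of_deriv_nonpos (convex_Icc 0 1)
    · exact (continuous_iff_continuousAt.mpr
        (fun t => (hψ' t).differentiableAt.continuousAt)).continuousOn
    · intro t ht
      exact ((hψ' t).differentiableAt).differentiableWithinAt
    · intro t ht
      rw [interior_Icc] at ht
      rw [(hψ' t).deriv]
      have hb : ⟪g (x + t • v) - g x, v⟫ ≤ L * t * ‖v‖ ^ 2 := by
        calc ⟪g (x + t • v) - g x, v⟫ ≤ ‖g (x + t • v) - g x‖ * ‖v‖ :=
              real_inner_le_norm _ _
          _ ≤ (L * ‖(x + t • v) - x‖) * ‖v‖ := by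
              gcongr; exact hlip _ _
          _ = L * (|t| * ‖v‖) * ‖v‖ := by simp [norm_smul, Real.norm_eq_abs]
          _ = L * t * ‖v‖ ^ 2 := by rw [abs_of_pos ht.1]; ring
      have heq : ⟪g (x + t • v), v⟫ - ⟪g x, v⟫ = ⟪g (x + t • v) - g x, v⟫ :=
        (inner_sub_left _ _ _).symm
      rw [heq]
      linarith
  have key := hanti (Set.left_mem_Icc.mpr one_pos.le) (Set.right_mem_Icc.mpr one_pos.le) one_pos.le
  simp only [hψ, zero_smul, add_zero, one_smul, zero_mul, one_pow, mul_one,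
    sub_zero, zero_pow] at key
  nlinarith [key]

end aux

theorem sgd_iterationwise_nonexpansive {d n : ℕ}
    (ℓ : Fin n → EuclideanSpace ℝ (Fin d) → ℝ)
    (g : Fin n → EuclideanSpace ℝ (Fin d) → EuclideanSpace ℝ (Fin d))
    (L η : ℝ) (hL : 0 < L)
    (hgrad : ∀ i z, HasGradientAt (ℓ i) (g i z) z)
    (hlip : ∀ i u v, ‖g i u - g i v‖ ≤ L * ‖u - v‖)
    (hη : 0 < η) (hηL : η ≤ 1 / L)
    (x : ℕ → EuclideanSpace ℝ (Fin d)) (ξ : ℕ → Fin n)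
    (hupd : ∀ k, x (k + 1) = x k - η • g (ξ k) (x k))
    (hstar : ∀ (k : ℕ) (xstar : EuclideanSpace ℝ (Fin d)),
      (∀ y, ℓ (ξ k) xstar ≤ ℓ (ξ k) y) →
      ℓ (ξ k) (x k) - ℓ (ξ k) xstar + ⟪xstar - x k, g (ξ k) (x k)⟫ ≤ 0) :
    ∀ (k : ℕ) (xstar : EuclideanSpace ℝ (Fin d)),
      (∀ y, ℓ (ξ k) xstar ≤ ℓ (ξ k) y) →
      ‖x (k + 1) - xstar‖ ≤ ‖x k - xstar‖ := by
  intro k xstar hmin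
  set i := ξ k
  set gk := g i (x k) with hgk
  -- star convexity rearranged
  have hstark := hstar k xstar hmin
  have hneg : ⟪xstar - x k, gk⟫ = -⟪x k - xstar, gk⟫ := by
    rw [← inner_neg_left, neg_sub]
  have hin : ℓ i (x k) - ℓ i xstar ≤ ⟪x k - xstar, gk⟫ := by
    rw [hneg] at hstark; linarith
  -- gradient norm bound from descent lemma
  have hdesc := descent_aux (ℓ i) (g i) L hL (hgrad i) (hlip i) (x k) (-(L⁻¹ • gk))
  have h1 : ⟪gk, -(L⁻¹ • gk)⟫ = -(L⁻¹ * ‖gk‖ ^ 2) := by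
    rw [inner_neg_right, real_inner_smul_right, real_inner_self_eq_norm_sq]
  have h2 : ‖-(L⁻¹ • gk)‖ ^ 2 = L⁻¹ ^ 2 * ‖gk‖ ^ 2 := by
    rw [norm_neg, norm_smul, mul_pow, Real.norm_eq_abs, sq_abs]
  rw [h1, h2] at hdesc
  have hmin' := hmin (x k + -(L⁻¹ • gk))
  have hg2 : ‖gk‖ ^ 2 ≤ 2 * L * (ℓ i (x k) - ℓ i xstar) := by
    have hL' : L ≠ 0 := ne_of_gt hL
    have hq : L / 2 * (L⁻¹ ^ 2 * ‖gk‖ ^ 2) = L⁻¹ * ‖gk‖ ^ 2 / 2 := by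
      field_simp
    rw [hq] at hdesc
    have key : L⁻¹ * ‖gk‖ ^ 2 / 2 ≤ ℓ i (x k) - ℓ i xstar := by
      have := le_trans hmin' hdesc; linarith
    calc ‖gk‖ ^ 2 = 2 * L * (L⁻¹ * ‖gk‖ ^ 2 / 2) := by field_simp
      _ ≤ 2 * L * (ℓ i (x k) - ℓ i xstar) :=
          mul_le_mul_of_nonneg_left key (by linarith)
  have hD : 0 ≤ ℓ i (x k) - ℓ i xstar := sub_nonneg.mpr (hmin (x k))
  have hηL' : η * L ≤ 1 := by
    rw [le_div_iff₀ hL] at hηL; exact hηL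
  -- expand the squared norm
  rw [hupd k]
  have heq : x k - η • gk - xstar = (x k - xstar) - η • gk := by abel
  rw [heq]
  have hexp : ‖(x k - xstar) - η • gk‖ ^ 2
      = ‖x k - xstar‖ ^ 2 - 2 * η * ⟪x k - xstar, gk⟫ + η ^ 2 * ‖gk‖ ^ 2 := by
    rw [norm_sub_sq_real, real_inner_smul_right, norm_smul, mul_pow,
      Real.norm_eq_abs, sq_abs]
    ring
  have hsq : ‖(x k - xstar) - η • gk‖ ^ 2 ≤ ‖x k - xstar‖ ^ 2 := by
    rw [hexp]
    nlinarith [mul_le_mul_of_nonneg_left hg2 (sq_nonneg η),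
      mul_le_mul_of_nonneg_right hηL' (mul_nonneg hη.le hD),
      mul_le_mul_of_nonneg_left hin (by positivity : (0:ℝ) ≤ 2 * η)]
  nlinarith [hsq, norm_nonneg ((x k - xstar) - η • gk), norm_nonneg (x k - xstar)]
end
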